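/- For complex a1,b1,a2,b2 and nonnegative integers p1,p2,k,μ: C(k+μ, k) · S_{a1,b1}^{a2,b2,p2}(p1, k+μ) = Σ_{j2=0}^{p2} Σ_{j1=0}^{p1} C(p1,j1) C(p2,j2) · S_{a1,0}^{a2,0,p2−j2}(p1−j1, μ) · S_{a1,b1}^{a2,b2,j2}(j1, k). -/

import Mathlib

open Finset

/-- Stirling numbers of the second kind. -/
def stirling2 : ℕ → ℕ → ℕ
  | 0, 0 => 1
  | 0, _ + 1 => 0
  | _ + 1, 0 => 0
  | p + 1, k + 1 => stirling2 p k + (k + 1) * stirling2 p (k + 1)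

/-- Unsigned Stirling numbers of the first kind. -/
def stirling1 : ℕ → ℕ → ℕ
  | 0, 0 => 1
  | 0, _ + 1 => 0
  | _ + 1, 0 => 0
  | p + 1, k + 1 => stirling1 p k + p * stirling1 p (k + 1)

/-- Stirling numbers of the second kind with integer second argument (0 when negative). -/
def stirling2Z (p : ℕ) (k : ℤ) : ℤ :=
  if k < 0 then 0 else stirling2 p k.toNat

/-- Generalized Stirling number of the second kind
`S_{a1,b1}^{a2,b2,p2}(p1,k)`. -/
noncomputable def gsn (a1 b1 a2 b2 : ℂ) (p1 p2 k : ℕ) : ℂ :=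
  (1 / (k.factorial : ℂ)) * ∑ j ∈ range (k + 1),
    (-1) ^ j * (k.choose j : ℂ) * (a1 * ((k : ℂ) - j) + b1) ^ p1 *
      (a2 * ((k : ℂ) - j) + b2) ^ p2

/-- Generalized Stirling number with integer index (0 when negative). -/
noncomputable def gsnZ (a1 b1 a2 b2 : ℂ) (p1 p2 : ℕ) (k : ℤ) : ℂ :=
  if k < 0 then 0 else gsn a1 b1 a2 b2 p1 p2 k.toNat

/-! `k! · gsn … k` is the `k`-th forward difference at `0` of the weight
`x ↦ (a1 x + b1)^p1 (a2 x + b2)^p2`. Since `Δ^(k+μ) = Δ^k Δ^μ`, and the binomial theorem writes the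
weight at `y + z` as a sum of products of a function of `y` and a function of `z`, the
`(k+μ)`-th difference factors into products of `k`-th and `μ`-th differences. -/

open fwdDiff

section fwdDiff

variable {ι M R : Type*} [AddCommMonoid M] [CommRing R]

theorem fwdDiff_iter_add_eq_sum_mul (h : M) (F : M → R) (t : Finset ι) (f g : ι → M → R)
    (hF : ∀ y z, F (y + z) = ∑ i ∈ t, f i y * g i z) (k μ : ℕ) (y z : M) :
    (Δ_[h])^[k + μ] F (y + z) = ∑ i ∈ t, (Δ_[h])^[k] (f i) y * (Δ_[h])^[μ] (g i) z := by
  have hshift : (fun r ↦ (Δ_[h])^[μ] F (r + z)) = ∑ i ∈ t, (Δ_[h])^[μ] (g i) z • f i := by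
    ext r
    simp only [fwdDiff_iter_eq_sum_shift, add_assoc, hF, Finset.sum_apply, Pi.smul_apply,
      smul_eq_mul, Finset.smul_sum, Finset.sum_mul]
    rw [Finset.sum_comm]
    refine Finset.sum_congr rfl fun i _ ↦ Finset.sum_congr rfl fun j _ ↦ ?_
    simp only [zsmul_eq_mul]
    ring
  rw [Function.iterate_add_apply, ← fwdDiff_iter_comp_add, hshift, fwdDiff_iter_finsetSum,
    Finset.sum_apply]
  simp only [fwdDiff_iter_const_smul, Pi.smul_apply, smul_eq_mul, mul_comm]

theorem sum_range_neg_one_pow_mul_choose_eq_fwdDiff_iter (f : R → R) (k : ℕ) :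
    ∑ j ∈ range (k + 1), (-1) ^ j * (k.choose j : R) * f (k - j) = (Δ_[1])^[k] f 0 := by
  rw [fwdDiff_iter_eq_sum_shift, ← Finset.sum_range_reflect]
  refine Finset.sum_congr rfl fun j hj ↦ ?_
  have hjk : j ≤ k := Nat.lt_succ_iff.mp (Finset.mem_range.mp hj)
  have harg : (k : R) - (k - j : ℕ) = 0 + j • 1 := by simp [Nat.cast_sub hjk]
  rw [Nat.add_sub_cancel, Nat.choose_symm hjk, harg, zsmul_eq_mul]
  push_cast
  ring

end fwdDiff

def gsnWeight (a1 b1 a2 b2 : ℂ) (p1 p2 : ℕ) (x : ℂ) : ℂ :=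
  (a1 * x + b1) ^ p1 * (a2 * x + b2) ^ p2

theorem gsn_eq_fwdDiff_iter (a1 b1 a2 b2 : ℂ) (p1 p2 k : ℕ) :
    gsn a1 b1 a2 b2 p1 p2 k = (Δ_[1])^[k] (gsnWeight a1 b1 a2 b2 p1 p2) 0 / k.factorial := by
  rw [gsn, ← sum_range_neg_one_pow_mul_choose_eq_fwdDiff_iter, one_div_mul_eq_div]
  simp only [gsnWeight, mul_assoc]

theorem gsnWeight_add (a1 b1 a2 b2 : ℂ) (p1 p2 : ℕ) (y z : ℂ) :
    gsnWeight a1 b1 a2 b2 p1 p2 (y + z) =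
      ∑ j ∈ range (p1 + 1) ×ˢ range (p2 + 1),
        ((p1.choose j.1 * p2.choose j.2 : ℂ) • gsnWeight a1 b1 a2 b2 j.1 j.2) y *
          gsnWeight a1 0 a2 0 (p1 - j.1) (p2 - j.2) z := by
  have h1 : a1 * (y + z) + b1 = (a1 * y + b1) + (a1 * z + 0) := by ring
  have h2 : a2 * (y + z) + b2 = (a2 * y + b2) + (a2 * z + 0) := by ring
  rw [Finset.sum_product, gsnWeight, h1, h2, add_pow, add_pow, Finset.sum_mul_sum]
  refine Finset.sum_congr rfl fun j1 _ ↦ Finset.sum_congr rfl fun j2 _ ↦ ?_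
  simp only [gsnWeight, Pi.smul_apply, smul_eq_mul]
  ring

theorem stmt19 (a1 b1 a2 b2 : ℂ) (p1 p2 k μ : ℕ) :
    ((k + μ).choose k : ℂ) * gsn a1 b1 a2 b2 p1 p2 (k + μ) =
      ∑ j2 ∈ range (p2 + 1), ∑ j1 ∈ range (p1 + 1),
        (p1.choose j1 : ℂ) * (p2.choose j2 : ℂ) *
          gsn a1 0 a2 0 (p1 - j1) (p2 - j2) μ * gsn a1 b1 a2 b2 j1 j2 k := by
  have hsplit := fwdDiff_iter_add_eq_sum_mul 1 _ _ _ _ (gsnWeight_add a1 b1 a2 b2 p1 p2) k μ 0 0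
  rw [add_zero] at hsplit
  simp only [gsn_eq_fwdDiff_iter, Nat.cast_add_choose, hsplit, fwdDiff_iter_const_smul,
    Pi.smul_apply, smul_eq_mul]
  rw [Finset.sum_div, Finset.mul_sum, Finset.sum_product, Finset.sum_comm]
  have hN : ((k + μ).factorial : ℂ) ≠ 0 := mod_cast (k + μ).factorial_ne_zero
  refine Finset.sum_congr rfl fun j2 _ ↦ Finset.sum_congr rfl fun j1 _ ↦ ?_
  field_simp
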